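/- Fix an integer m ≥ 1 and set x(t) = cos(2t), y(t) = cos((2m+1)t + 1/2). For each integer j with m+1 ≤ j ≤ 3m+1, let t₁(j) = ((2j − 2m − 1)π − 1)/(2(2m+1)) be the first time of the j-th Type I double point. Then: (a) y(t₁(j)) = 0 for every such j, so every Type I double point lies on the x-axis; (b) x(t₁(j)) ≠ 0 for every such j, so no Type I double point is at the origin; and (c) the number of integers j with m+1 ≤ j ≤ 3m+1 and x(t₁(j)) > 0 equals 2⌈m/2⌉. -/

import Mathlib

/-! With `n = 2j - 2m - 1` and `M = 2m + 1` we have `t₁ = (nπ - 1)/(2M)`, so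
`M t₁ + 1/2 = nπ/2` is an odd multiple of `π/2`, while `x(t₁) = cos θ` with
`θ = (nπ - 1)/M ∈ (0, 2π)`. If `cos θ = 0`, clearing denominators makes an integer
multiple of `π` equal to `2`, impossible as `π` is irrational. Since an integer multiple
of `π` is either `≤ 0` or `≥ π > 2`, the conditions `θ < π/2` and `3π/2 < θ`, i.e.
`(2n - M)π < 2` and `2 < (2n - 3M)π`, become `2n ≤ M` and `3M < 2n`; the `j` satisfying
them form two integer intervals of `⌈m/2⌉` elements each. -/

open Real

/-- The first time of the Type I double point with index `j` (for `m+1 ≤ j ≤ 3m+1`)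
of the projection `t ↦ (cos 2t, cos((2m+1)t + 1/2))`. -/
noncomputable def tI₁ (m j : ℤ) : ℝ :=
  ((2 * (j : ℝ) - 2 * (m : ℝ) - 1) * π - 1) / (2 * (2 * (m : ℝ) + 1))

lemma intCast_mul_pi_ne_intCast (a : ℤ) {b : ℤ} (hb : b ≠ 0) : (a : ℝ) * π ≠ b := by
  rcases eq_or_ne a 0 with rfl | ha
  · simpa [eq_comm] using hb
  · exact (irrational_pi.intCast_mul ha).ne_int b

lemma intCast_mul_pi_lt_two_iff (k : ℤ) : (k : ℝ) * π < 2 ↔ k ≤ 0 := by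
  constructor
  · intro h
    by_contra! hk
    have : (1 : ℝ) ≤ k := by exact_mod_cast hk
    nlinarith [pi_gt_three]
  · intro hk
    have : (k : ℝ) ≤ 0 := by exact_mod_cast hk
    nlinarith [pi_pos]

lemma two_lt_intCast_mul_pi_iff (k : ℤ) : 2 < (k : ℝ) * π ↔ 0 < k := by
  constructor
  · intro h
    by_contra! hk
    have : (k : ℝ) ≤ 0 := by exact_mod_cast hk
    nlinarith [pi_pos]
  · intro hk
    have : (1 : ℝ) ≤ k := by exact_mod_cast hk
    nlinarith [pi_gt_three]

lemma cos_pos_iff_of_mem_Icc {θ : ℝ} (h0 : 0 ≤ θ) (h2π : θ ≤ 2 * π) :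
    0 < cos θ ↔ θ < π / 2 ∨ 3 * π / 2 < θ := by
  constructor
  · intro hpos
    by_contra! h
    linarith [cos_nonpos_of_pi_div_two_le_of_le h.1 (by linarith [h.2])]
  · rintro (h | h)
    · exact cos_pos_of_mem_Ioo ⟨by linarith [pi_pos], h⟩
    · rw [← cos_sub_two_pi]
      exact cos_pos_of_mem_Ioo ⟨by linarith, by linarith [pi_pos]⟩

lemma cos_intCast_mul_pi_sub_one_div_ne_zero (n : ℤ) {M : ℤ} (hM : M ≠ 0) :
    cos ((n * π - 1) / M) ≠ 0 := by
  intro h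
  obtain ⟨k, hk⟩ := cos_eq_zero_iff.mp h
  rw [div_eq_iff (by exact_mod_cast hM)] at hk
  apply intCast_mul_pi_ne_intCast (2 * n - (2 * k + 1) * M) (b := 2) two_ne_zero
  push_cast
  linarith

lemma cos_intCast_mul_pi_sub_one_div_pos_iff {n M : ℤ} (hM : 0 < M) (hn : 1 ≤ n)
    (hnM : n ≤ 2 * M) :
    0 < cos ((n * π - 1) / M) ↔ 2 * n ≤ M ∨ 3 * M < 2 * n := by
  have hMr : (0 : ℝ) < M := by exact_mod_cast hM
  have hnr : (1 : ℝ) ≤ n := by exact_mod_cast hn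
  have hnMr : (n : ℝ) ≤ 2 * M := by exact_mod_cast hnM
  have hlow : (n * π - 1) / M < π / 2 ↔ ((2 * n - M : ℤ) : ℝ) * π < 2 := by
    rw [div_lt_iff₀ hMr]; push_cast; constructor <;> intro <;> linarith
  have hhigh : 3 * π / 2 < (n * π - 1) / M ↔ 2 < ((2 * n - 3 * M : ℤ) : ℝ) * π := by
    rw [lt_div_iff₀ hMr]; push_cast; constructor <;> intro <;> linarith
  rw [cos_pos_iff_of_mem_Icc (div_nonneg (by nlinarith [pi_gt_three]) hMr.le)
    ((div_le_iff₀ hMr).mpr (by nlinarith [pi_pos])), hlow, hhigh,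
    intCast_mul_pi_lt_two_iff, two_lt_intCast_mul_pi_iff]
  omega

lemma two_mul_tI₁ (m j : ℤ) :
    2 * tI₁ m j = (((2 * j - 2 * m - 1 : ℤ) : ℝ) * π - 1) / ((2 * m + 1 : ℤ) : ℝ) := by
  have hM : (2 * (m : ℝ) + 1) ≠ 0 := by exact_mod_cast (show 2 * m + 1 ≠ 0 by omega)
  unfold tI₁
  push_cast
  field_simp

lemma cos_mul_tI₁_add_half (m j : ℤ) : cos ((2 * (m : ℝ) + 1) * tI₁ m j + 1 / 2) = 0 := by
  have hM : (2 * (m : ℝ) + 1) ≠ 0 := by exact_mod_cast (show 2 * m + 1 ≠ 0 by omega)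
  refine cos_eq_zero_iff.mpr ⟨j - m - 1, ?_⟩
  unfold tI₁
  field_simp
  push_cast
  ring

lemma cos_two_mul_tI₁_ne_zero (m j : ℤ) : cos (2 * tI₁ m j) ≠ 0 := by
  rw [two_mul_tI₁]
  exact cos_intCast_mul_pi_sub_one_div_ne_zero _ (by omega)

lemma cos_two_mul_tI₁_pos_iff {m j : ℤ} (h₁ : m + 1 ≤ j) (h₂ : j ≤ 3 * m + 1) :
    0 < cos (2 * tI₁ m j) ↔ 2 * j ≤ 3 * m + 1 ∨ 5 * m + 3 ≤ 2 * j := by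
  rw [two_mul_tI₁, cos_intCast_mul_pi_sub_one_div_pos_iff (by omega) (by omega)
    (by omega)]
  omega

lemma setOf_cos_two_mul_tI₁_pos (m : ℤ) :
    {j : ℤ | m + 1 ≤ j ∧ j ≤ 3 * m + 1 ∧ 0 < cos (2 * tI₁ m j)} =
      ↑(Finset.Icc (m + 1) ((3 * m + 1) / 2) ∪ Finset.Icc ((5 * m + 4) / 2) (3 * m + 1)) := by
  ext j
  simp only [Set.mem_ofPred_eq, Finset.coe_union, Finset.coe_Icc, Set.mem_union, Set.mem_Icc]
  constructor
  · rintro ⟨h₁, h₂, hpos⟩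
    have := (cos_two_mul_tI₁_pos_iff h₁ h₂).mp hpos
    omega
  · intro h
    have h₁ : m + 1 ≤ j := by omega
    have h₂ : j ≤ 3 * m + 1 := by omega
    exact ⟨h₁, h₂, (cos_two_mul_tI₁_pos_iff h₁ h₂).mpr (by omega)⟩

lemma card_Icc_union_Icc_eq_two_mul_ceil_half (m : ℤ) (hm : 0 ≤ m) :
    ((Finset.Icc (m + 1) ((3 * m + 1) / 2) ∪ Finset.Icc ((5 * m + 4) / 2) (3 * m + 1)).card : ℤ)
      = 2 * ⌈(m : ℚ) / 2⌉ := by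
  have hceil : ⌈(m : ℚ) / 2⌉ = -(-m / 2) := by
    exact_mod_cast Rat.ceil_intCast_div_natCast m 2
  have hdisj : Disjoint (Finset.Icc (m + 1) ((3 * m + 1) / 2))
      (Finset.Icc ((5 * m + 4) / 2) (3 * m + 1)) := by
    rw [Finset.disjoint_left]
    intro x hx hx'
    simp only [Finset.mem_Icc] at hx hx'
    omega
  rw [Finset.card_union_of_disjoint hdisj, Int.card_Icc, Int.card_Icc, hceil, Nat.cast_add,
    Int.toNat_of_nonneg (by omega), Int.toNat_of_nonneg (by omega)]
  rcases Int.even_or_odd' m with ⟨r, rfl | rfl⟩ <;> omega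

theorem typeI_double_points_on_x_axis (m : ℤ) (hm : 1 ≤ m) :
    (∀ j : ℤ, m + 1 ≤ j → j ≤ 3 * m + 1 →
      Real.cos ((2 * (m : ℝ) + 1) * tI₁ m j + 1 / 2) = 0) ∧
    (∀ j : ℤ, m + 1 ≤ j → j ≤ 3 * m + 1 →
      Real.cos (2 * tI₁ m j) ≠ 0) ∧
    ({j : ℤ | m + 1 ≤ j ∧ j ≤ 3 * m + 1 ∧ 0 < Real.cos (2 * tI₁ m j)}.Finite ∧
      ({j : ℤ | m + 1 ≤ j ∧ j ≤ 3 * m + 1 ∧ 0 < Real.cos (2 * tI₁ m j)}.ncard : ℤ) =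
        2 * ⌈(m : ℚ) / 2⌉) := by
  refine ⟨fun j _ _ => cos_mul_tI₁_add_half m j, fun j _ _ => cos_two_mul_tI₁_ne_zero m j, ?_⟩
  rw [setOf_cos_two_mul_tI₁_pos, Set.ncard_coe_finset]
  exact ⟨Finset.finite_toSet _, card_Icc_union_Icc_eq_two_mul_ceil_half m (by omega)⟩
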